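/- Let H be an m×m real symmetric positive definite matrix, let m ≤ n, and let W ∈ R^{m×n} be such that G = H W has full row rank. Set P = (G Gᵀ)^{-1/2} G. Then for every η ∈ R the one-step improvement of the quadratic loss L(W) = (1/2)·Tr(Wᵀ H W) under the update W' = W − η P satisfies the exact identity L(W) − L(W') = η · ‖H W‖₁ − (η²/2) · Tr(H), where ‖·‖₁ is the Schatten 1-norm. -/

import Mathlib

open Matrix

open Classical in
/-- The unique positive semidefinite square root of a positive semidefinite matrix
(junk value `0` if `A` is not positive semidefinite). -/
noncomputable def matSqrt {m : ℕ} (A : Matrix (Fin m) (Fin m) ℝ) : Matrix (Fin m) (Fin m) ℝ :=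
  if h : A.PosSemidef then
    h.1.eigenvectorUnitary.1 * diagonal ((↑) ∘ (√·) ∘ h.1.eigenvalues) *
      (star h.1.eigenvectorUnitary : Matrix (Fin m) (Fin m) ℝ)
  else 0

/-- The GradWhitening operator `A ↦ (A Aᵀ)^{-1/2} A`. -/
noncomputable def whiten {m n : ℕ} (A : Matrix (Fin m) (Fin n) ℝ) : Matrix (Fin m) (Fin n) ℝ :=
  (matSqrt (A * Aᵀ))⁻¹ * A

/-- The Schatten 1-norm (sum of singular values): `‖A‖₁ = Tr((A Aᵀ)^{1/2})`. -/
noncomputable def schattenOne {m n : ℕ} (A : Matrix (Fin m) (Fin n) ℝ) : ℝ :=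
  (matSqrt (A * Aᵀ)).trace

/-- The quadratic loss `L(W) = (1/2) * Tr(Wᵀ H W)`. -/
noncomputable def loss {m n : ℕ} (H : Matrix (Fin m) (Fin m) ℝ)
    (W : Matrix (Fin m) (Fin n) ℝ) : ℝ :=
  (1 / 2) * (Wᵀ * H * W).trace

/-!
Write `G = H W` and `R = (G Gᵀ)^{1/2}`, so that the whitened step is `P = R⁻¹ G`. The matrix
square root is the continuous functional calculus square root, hence symmetric with `R R = G Gᵀ`,
and it is invertible because full row rank makes `G Gᵀ` positive definite. Therefore `P Pᵀ = 1`
and `Tr(G Pᵀ) = Tr(G Gᵀ R⁻¹) = Tr R = ‖G‖₁`. Expanding the quadratic loss along `W - η P`, the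
linear term is `η Tr(H W Pᵀ) = η ‖G‖₁` and the quadratic one is
`(η²/2) Tr(Pᵀ H P) = (η²/2) Tr(H P Pᵀ) = (η²/2) Tr H`.
-/

open scoped MatrixOrder

lemma Matrix.isUnit_of_rank_eq_card {ι K : Type*} [Fintype ι] [DecidableEq ι] [Field K]
    {A : Matrix ι ι K} (h : A.rank = Fintype.card ι) : IsUnit A := by
  have hrange : LinearMap.range A.mulVecLin = ⊤ :=
    Submodule.eq_top_of_finrank_eq (by simpa [Matrix.rank] using h)
  exact mulVec_surjective_iff_isUnit.mp (LinearMap.range_eq_top.mp hrange)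

lemma Matrix.posDef_mul_transpose_of_rank_eq_card {ι κ : Type*} [Fintype ι] [Fintype κ]
    [DecidableEq ι] {A : Matrix ι κ ℝ} (h : A.rank = Fintype.card ι) : (A * Aᵀ).PosDef := by
  have hpsd : (A * Aᵀ).PosSemidef := by
    simpa using posSemidef_self_mul_conjTranspose A
  refine hpsd.posDef_iff_isUnit.mpr (isUnit_of_rank_eq_card ?_)
  simpa [← conjTranspose_eq_transpose_of_trivial, rank_self_mul_conjTranspose] using h

lemma matSqrt_eq_cfcSqrt {m : ℕ} {A : Matrix (Fin m) (Fin m) ℝ} (hA : A.PosSemidef) :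
    matSqrt A = CFC.sqrt A := by
  rw [CFC.sqrt_eq_real_sqrt A hA.nonneg, cfcₙ_eq_cfc, hA.1.cfc_eq, matSqrt, dif_pos hA]
  rfl

lemma Matrix.transpose_cfcSqrt {ι : Type*} [Fintype ι] [DecidableEq ι] (S : Matrix ι ι ℝ) :
    (CFC.sqrt S)ᵀ = CFC.sqrt S := by
  rw [← conjTranspose_eq_transpose_of_trivial]
  exact (CFC.sqrt_nonneg S).isSelfAdjoint

section Whiten

variable {m n : ℕ} {A : Matrix (Fin m) (Fin n) ℝ}

lemma whiten_eq_inv_cfcSqrt_mul (hA : (A * Aᵀ).PosDef) :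
    whiten A = (CFC.sqrt (A * Aᵀ))⁻¹ * A := by
  rw [whiten, matSqrt_eq_cfcSqrt hA.posSemidef]

lemma isUnit_det_cfcSqrt (hA : (A * Aᵀ).PosDef) : IsUnit (CFC.sqrt (A * Aᵀ)).det :=
  (isUnit_iff_isUnit_det _).mp ((CFC.isUnit_sqrt_iff _ hA.posSemidef.nonneg).mpr hA.isUnit)

lemma whiten_mul_transpose_whiten (hA : (A * Aᵀ).PosDef) : whiten A * (whiten A)ᵀ = 1 := by
  have hRR := CFC.sqrt_mul_sqrt_self (A * Aᵀ) hA.posSemidef.nonneg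
  have hR := isUnit_det_cfcSqrt hA
  rw [whiten_eq_inv_cfcSqrt_mul hA, transpose_mul, transpose_nonsing_inv, transpose_cfcSqrt]
  set R := CFC.sqrt (A * Aᵀ)
  calc R⁻¹ * A * (Aᵀ * R⁻¹) = R⁻¹ * (R * R) * R⁻¹ := by simp only [hRR, Matrix.mul_assoc]
    _ = 1 := by rw [nonsing_inv_mul_cancel_left _ _ hR, mul_nonsing_inv _ hR]

lemma trace_mul_transpose_whiten (hA : (A * Aᵀ).PosDef) :
    (A * (whiten A)ᵀ).trace = schattenOne A := by
  have hRR := CFC.sqrt_mul_sqrt_self (A * Aᵀ) hA.posSemidef.nonneg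
  have hR := isUnit_det_cfcSqrt hA
  rw [schattenOne, matSqrt_eq_cfcSqrt hA.posSemidef, whiten_eq_inv_cfcSqrt_mul hA,
    transpose_mul, transpose_nonsing_inv, transpose_cfcSqrt]
  set R := CFC.sqrt (A * Aᵀ)
  rw [← Matrix.mul_assoc, ← hRR, mul_nonsing_inv_cancel_right _ _ hR]

end Whiten

section Loss

variable {m n : ℕ} {H : Matrix (Fin m) (Fin m) ℝ}

lemma loss_sub_loss_sub_smul (hH : H.IsSymm) (W P : Matrix (Fin m) (Fin n) ℝ) (η : ℝ) :
    loss H W - loss H (W - η • P) = η * (H * W * Pᵀ).trace - η ^ 2 * loss H P := by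
  have hleft : (Pᵀ * H * W).trace = (H * W * Pᵀ).trace := by
    rw [Matrix.mul_assoc, trace_mul_comm]
  have hright : (Wᵀ * H * P).trace = (H * W * Pᵀ).trace := by
    rw [← trace_transpose, ← hleft]
    simp only [transpose_mul, transpose_transpose, hH.eq, Matrix.mul_assoc]
  simp only [loss, transpose_sub, transpose_smul, Matrix.sub_mul, Matrix.mul_sub,
    Matrix.smul_mul, Matrix.mul_smul, trace_sub, trace_smul, smul_eq_mul, hleft, hright]
  ring

lemma loss_of_mul_transpose_eq_one {P : Matrix (Fin m) (Fin n) ℝ} (hP : P * Pᵀ = 1) :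
    loss H P = H.trace / 2 := by
  rw [loss, Matrix.mul_assoc, trace_mul_comm, Matrix.mul_assoc, hP, Matrix.mul_one]
  ring

end Loss

theorem whitened_step_improvement_identity_general {m n : ℕ}
    (H : Matrix (Fin m) (Fin m) ℝ) (hH : H.PosDef)
    (W : Matrix (Fin m) (Fin n) ℝ) (hrank : (H * W).rank = m) (η : ℝ) :
    loss H W - loss H (W - η • whiten (H * W)) =
      η * schattenOne (H * W) - (η ^ 2 / 2) * H.trace := by
  have hG : (H * W * (H * W)ᵀ).PosDef :=
    posDef_mul_transpose_of_rank_eq_card (by rw [hrank, Fintype.card_fin])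
  rw [loss_sub_loss_sub_smul (isHermitian_iff_isSymm.mp hH.1), trace_mul_transpose_whiten hG,
    loss_of_mul_transpose_eq_one (whiten_mul_transpose_whiten hG)]
  ring

/-- Exact one-step improvement identity for the whitened update: for every step size `η`,
`L(W) − L(W − η P) = η ‖H W‖₁ − (η²/2) Tr(H)` where `P = (G Gᵀ)^{-1/2} G`, `G = H W`. -/
theorem whitened_step_improvement_identity {m n : ℕ} (hmn : m ≤ n)
    (H : Matrix (Fin m) (Fin m) ℝ) (hH : H.PosDef)
    (W : Matrix (Fin m) (Fin n) ℝ) (hrank : (H * W).rank = m) (η : ℝ) :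
    loss H W - loss H (W - η • whiten (H * W)) =
      η * schattenOne (H * W) - (η ^ 2 / 2) * H.trace :=
  whitened_step_improvement_identity_general H hH W hrank η
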